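/- arXiv:2205.03198 — 3 statements merged into one kernel-verified Lean document; each statement's English description precedes it below -/
import Mathlib

section
/- Let k ∈ ℕ and φ, ψ ∈ SL with φ ⊢_k ψ, and let (F_j, m_j) be any DBM-sequence such that F_{k+1} is {¬φ∨ψ}-maximal and free of deep contradictions. Then B_{k+1}(φ) ≤ B_{k+1}(ψ). -/
/-!
Common framework: Depth-Bounded Boolean Logics, depth-bounded trees/forests,
mass functions and depth-bounded belief functions.
-/

namespace DBB

/-- Sentences of a propositional language with propositional variables in `V`,
connectives ¬, ∧, ∨ and the constant ⊥. -/
inductive Sentence (V : Type) : Type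
  | var  : V → Sentence V
  | bot  : Sentence V
  | neg  : Sentence V → Sentence V
  | conj : Sentence V → Sentence V → Sentence V
  | disj : Sentence V → Sentence V → Sentence V
  deriving DecidableEq

variable {V : Type}

/-- Boolean evaluation of a sentence under a valuation of the variables. -/
def eval (v : V → Bool) : Sentence V → Bool
  | .var p => v p
  | .bot => false
  | .neg φ => !(eval v φ)
  | .conj φ ψ => eval v φ && eval v ψ
  | .disj φ ψ => eval v φ || eval v ψ

/-- Classical (semantic) consequence `Γ ⊢ φ`. -/
def CC (Γ : Set (Sentence V)) (φ : Sentence V) : Prop :=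
  ∀ v : V → Bool, (∀ γ ∈ Γ, eval v γ = true) → eval v φ = true

/-- The 0-depth consequence relation `Γ ⊢₀ φ`: closure of `Γ` under the standard
introduction and elimination rules for ¬, ∧, ∨, ⊥. -/
inductive Der0 : Set (Sentence V) → Sentence V → Prop
  | prem {Γ : Set (Sentence V)} {φ} (h : φ ∈ Γ) : Der0 Γ φ
  | andI {Γ φ ψ} : Der0 Γ φ → Der0 Γ ψ → Der0 Γ (.conj φ ψ)
  | andE1 {Γ φ ψ} : Der0 Γ (.conj φ ψ) → Der0 Γ φ
  | andE2 {Γ φ ψ} : Der0 Γ (.conj φ ψ) → Der0 Γ ψ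
  | orI1 {Γ φ ψ} : Der0 Γ φ → Der0 Γ (.disj φ ψ)
  | orI2 {Γ φ ψ} : Der0 Γ ψ → Der0 Γ (.disj φ ψ)
  | orE1 {Γ φ ψ} : Der0 Γ (.disj φ ψ) → Der0 Γ (.neg φ) → Der0 Γ ψ
  | orE2 {Γ φ ψ} : Der0 Γ (.disj φ ψ) → Der0 Γ (.neg ψ) → Der0 Γ φ
  | negAndI1 {Γ φ ψ} : Der0 Γ (.neg φ) → Der0 Γ (.neg (.conj φ ψ))
  | negAndI2 {Γ φ ψ} : Der0 Γ (.neg ψ) → Der0 Γ (.neg (.conj φ ψ))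
  | negAndE1 {Γ φ ψ} : Der0 Γ (.neg (.conj φ ψ)) → Der0 Γ φ → Der0 Γ (.neg ψ)
  | negAndE2 {Γ φ ψ} : Der0 Γ (.neg (.conj φ ψ)) → Der0 Γ ψ → Der0 Γ (.neg φ)
  | negOrI {Γ φ ψ} : Der0 Γ (.neg φ) → Der0 Γ (.neg ψ) → Der0 Γ (.neg (.disj φ ψ))
  | negOrE1 {Γ φ ψ} : Der0 Γ (.neg (.disj φ ψ)) → Der0 Γ (.neg φ)
  | negOrE2 {Γ φ ψ} : Der0 Γ (.neg (.disj φ ψ)) → Der0 Γ (.neg ψ)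
  | dnI {Γ φ} : Der0 Γ φ → Der0 Γ (.neg (.neg φ))
  | dnE {Γ φ} : Der0 Γ (.neg (.neg φ)) → Der0 Γ φ
  | botI {Γ φ} : Der0 Γ φ → Der0 Γ (.neg φ) → Der0 Γ .bot
  | botE {Γ φ} : Der0 Γ .bot → Der0 Γ φ

/-- The set of subsentences of a sentence. -/
def subs : Sentence V → Set (Sentence V)
  | .var p => {Sentence.var p}
  | .bot => {Sentence.bot}
  | .neg φ => insert (.neg φ) (subs φ)
  | .conj φ ψ => insert (.conj φ ψ) (subs φ ∪ subs ψ)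
  | .disj φ ψ => insert (.disj φ ψ) (subs φ ∪ subs ψ)

/-- Subsentences of a set of sentences. -/
def subsSet (Γ : Set (Sentence V)) : Set (Sentence V) := ⋃ γ ∈ Γ, subs γ

/-- The k-depth consequence relations `Γ ⊢ₖ φ`: for `k > 0`, `Γ ⊢ₖ φ` iff there is a
subsentence `β` of `Γ ∪ {φ}` such that `Γ, β ⊢_{k-1} φ` and `Γ, ¬β ⊢_{k-1} φ`. -/
def DerK : ℕ → Set (Sentence V) → Sentence V → Prop
  | 0, Γ, φ => Der0 Γ φ
  | k+1, Γ, φ => ∃ β, β ∈ subsSet (insert φ Γ) ∧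
      DerK k (insert β Γ) φ ∧ DerK k (insert (Sentence.neg β) Γ) φ

/-- Elements of `SL ∪ {*}`: `none` is the empty information `*`, `some γ` is the sentence `γ`.
`prems` gives the corresponding set of premises. -/
def prems : Option (Sentence V) → Set (Sentence V)
  | none => ∅
  | some γ => {γ}

/-- `r ⊢₀ φ` for `r ∈ SL ∪ {*}`. -/
def Der0O (r : Option (Sentence V)) (φ : Sentence V) : Prop := Der0 (prems r) φ

/-- `r ⊢ₖ φ` for `r ∈ SL ∪ {*}`. -/
def DerKO (k : ℕ) (r : Option (Sentence V)) (φ : Sentence V) : Prop := DerK k (prems r) φ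

/-- classical consequence from `r ∈ SL ∪ {*}`. -/
def CCO (r : Option (Sentence V)) (φ : Sentence V) : Prop := CC (prems r) φ

/-- `r ⊢₀ s` where also the conclusion may be the empty information `*`
(deriving `*` is trivial). -/
def Der0OO (r : Option (Sentence V)) : Option (Sentence V) → Prop
  | none => True
  | some φ => Der0O r φ

/-! ### Depth-bounded trees -/

/-- Binary trees whose internal nodes are labelled by the branching sentence `β`:
a node with branching sentence `β` and current information `α` has children carrying
the information `α ∧ β` and `α ∧ ¬β` respectively. -/
inductive DBTree (V : Type) : Type
  | leaf : DBTree V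
  | node : Sentence V → DBTree V → DBTree V → DBTree V
  deriving DecidableEq

/-- The information carried by a child of a node with information `r ∈ SL ∪ {*}` and
branching sentence `β`: `r ∧ β` (or just `β` when `r = *`). -/
def extend (r : Option (Sentence V)) (β : Sentence V) : Option (Sentence V) :=
  some (match r with
    | none => β
    | some α => Sentence.conj α β)

/-- The set `Le(T)` of labels of the leaves of a tree `t` rooted in `r ∈ SL ∪ {*}`. -/
def leafLabels [DecidableEq V] : Option (Sentence V) → DBTree V → Finset (Option (Sentence V))
  | r, .leaf => {r}
  | r, .node β t₁ t₂ =>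
      leafLabels (extend r β) t₁ ∪ leafLabels (extend r (.neg β)) t₂

/-- The number of leaves of a tree. -/
def numLeaves : DBTree V → ℕ
  | .leaf => 1
  | .node _ t₁ t₂ => numLeaves t₁ + numLeaves t₂

/-- `Grow k t t'`: `t'` is obtained from `t` by expanding a (possibly empty) subset of the
depth-`k` leaves of `t`, each expanded leaf getting two children via some branching sentence. -/
inductive Grow : ℕ → DBTree V → DBTree V → Prop
  | keep (k : ℕ) : Grow k .leaf .leaf
  | expand (β : Sentence V) : Grow 0 .leaf (.node β .leaf .leaf)
  | node {k : ℕ} {t₁ t₁' t₂ t₂' : DBTree V} (β : Sentence V) :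
      Grow k t₁ t₁' → Grow k t₂ t₂' →
      Grow (k+1) (.node β t₁ t₂) (.node β t₁' t₂')

/-- A depth-bounded tree sequence (DBT-sequence): `T₀` is a single node, and `T_{k+1}` is
obtained from `T_k` by branching at least one node of depth `k`. -/
structure DBTSeq (V : Type) where
  tree : ℕ → DBTree V
  init : tree 0 = DBTree.leaf
  grow : ∀ k, Grow k (tree k) (tree (k+1))
  progress : ∀ k, tree (k+1) ≠ tree k

/-- `t` is a tree of depth `k` belonging to some DBT-sequence. -/
def IsDepthKTree (k : ℕ) (t : DBTree V) : Prop := ∃ S : DBTSeq V, S.tree k = t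

/-- `r` decides `φ`: `r ⊢₀ φ` or `r ⊢₀ ¬φ`. -/
def Decides (r : Option (Sentence V)) (φ : Sentence V) : Prop :=
  Der0O r φ ∨ Der0O r (.neg φ)

/-- `|dec(Γ, φ)|`: the number of elements of `Γ` deciding `φ`. -/
noncomputable def decCount [DecidableEq V] (Γ : Finset (Option (Sentence V)))
    (φ : Sentence V) : ℕ := by
  classical exact (Γ.filter (fun α => Decides α φ)).card

/-- A tree rooted in `r` is `{φ}`-closed iff all its leaves decide `φ`. -/
def TreeClosed [DecidableEq V] (r : Option (Sentence V)) (t : DBTree V) (φ : Sentence V) : Prop :=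
  ∀ α ∈ leafLabels r t, Decides α φ

/-- A tree `t` of depth `k` rooted in `r` is `{φ}`-maximal iff no depth-`k` tree with the same
root has strictly more leaves deciding `φ`. -/
def TreeMaximal [DecidableEq V] (r : Option (Sentence V)) (k : ℕ) (t : DBTree V)
    (φ : Sentence V) : Prop :=
  ∀ t' : DBTree V, IsDepthKTree k t' →
    decCount (leafLabels r t') φ ≤ decCount (leafLabels r t) φ

/-- A tree rooted in `r` is free of deep contradictions iff every classically inconsistent
leaf is already 0-depth inconsistent. -/
def TreeFreeDC [DecidableEq V] (r : Option (Sentence V)) (t : DBTree V) : Prop :=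
  ∀ α ∈ leafLabels r t, CCO α Sentence.bot → Der0O α Sentence.bot

/-! ### Depth-bounded forests -/

/-- A depth-bounded forest sequence (DBF-sequence) based on the support set
`Supp ⊆ SL ∪ {*}`: a DBT-sequence rooted in `γ` for each `γ ∈ Supp`. -/
structure DBFSeq (V : Type) where
  Supp : Finset (Option (Sentence V))
  suppNE : Supp.Nonempty
  tree : Option (Sentence V) → ℕ → DBTree V
  init : ∀ γ ∈ Supp, tree γ 0 = DBTree.leaf
  grow : ∀ γ ∈ Supp, ∀ k, Grow k (tree γ k) (tree γ (k+1))
  progress : ∀ γ ∈ Supp, ∀ k, tree γ (k+1) ≠ tree γ k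

/-- `Le(F_k)`: the leaves of the depth-`k` forest of a DBF-sequence. -/
noncomputable def DBFSeq.leaves [DecidableEq V] (F : DBFSeq V) (k : ℕ) :
    Finset (Option (Sentence V)) := by
  classical exact F.Supp.biUnion (fun γ => leafLabels γ (F.tree γ k))

/-- The depth-`k` forest is `{φ}`-closed (tree-wise). -/
def DBFSeq.Closed [DecidableEq V] (F : DBFSeq V) (k : ℕ) (φ : Sentence V) : Prop :=
  ∀ γ ∈ F.Supp, TreeClosed γ (F.tree γ k) φ

/-- The depth-`k` forest is `{φ}`-maximal (tree-wise). -/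
def DBFSeq.Maximal [DecidableEq V] (F : DBFSeq V) (k : ℕ) (φ : Sentence V) : Prop :=
  ∀ γ ∈ F.Supp, TreeMaximal γ k (F.tree γ k) φ

/-- The depth-`k` forest is free of deep contradictions (tree-wise). -/
def DBFSeq.FreeDC [DecidableEq V] (F : DBFSeq V) (k : ℕ) : Prop :=
  ∀ γ ∈ F.Supp, TreeFreeDC γ (F.tree γ k)

/-- `MassStep m m' r t t'`: the mass function `m'` refines `m` along the expansion of `t`
into `t'` (leaves keep their mass; the mass of an expanded leaf is split among its
two children). -/
inductive MassStep (m m' : Option (Sentence V) → ℝ) :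
    Option (Sentence V) → DBTree V → DBTree V → Prop
  | keep {r : Option (Sentence V)} :
      m' r = m r → MassStep m m' r .leaf .leaf
  | split {r : Option (Sentence V)} {β : Sentence V} :
      m' (extend r β) + m' (extend r (.neg β)) = m r →
      MassStep m m' r .leaf (.node β .leaf .leaf)
  | node {r : Option (Sentence V)} {β : Sentence V} {t₁ t₁' t₂ t₂' : DBTree V} :
      MassStep m m' (extend r β) t₁ t₁' →
      MassStep m m' (extend r (.neg β)) t₂ t₂' →
      MassStep m m' r (.node β t₁ t₂) (.node β t₁' t₂')

/-- A depth-bounded mass sequence (DBM-sequence): a DBF-sequence free of deep contradictions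
together with probability mass functions `m_k` over `Le(F_k)` such that the mass of each leaf
of `F_k` is either kept (if it remains a leaf) or split among its two children in `F_{k+1}`. -/
structure DBMSeq (V : Type) [DecidableEq V] extends DBFSeq V where
  m : ℕ → Option (Sentence V) → ℝ
  nonneg : ∀ k, ∀ α ∈ toDBFSeq.leaves k, 0 ≤ m k α
  total : ∀ k, ∑ α ∈ toDBFSeq.leaves k, m k α = 1
  incZero : ∀ k, ∀ α ∈ toDBFSeq.leaves k, Der0O α Sentence.bot → m k α = 0
  freeDC : ∀ k, toDBFSeq.FreeDC k
  massStep : ∀ γ ∈ toDBFSeq.Supp, ∀ k,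
      MassStep (m k) (m (k+1)) γ (toDBFSeq.tree γ k) (toDBFSeq.tree γ (k+1))

/-- The k-depth belief function `B_k(φ) = m_k(b_k(φ))` where
`b_k(φ) = {α ∈ Le(F_k) : α ⊢₀ φ, α ⊬₀ ⊥}`. -/
noncomputable def DBMSeq.B [DecidableEq V] (M : DBMSeq V) (k : ℕ) (φ : Sentence V) : ℝ := by
  classical exact ∑ α ∈ M.toDBFSeq.leaves k,
    if Der0O α φ ∧ ¬ Der0O α Sentence.bot then M.m k α else 0

/-- The k-depth plausibility function `Pl_k(φ) = m_k(pl_k(φ))` where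
`pl_k(φ) = {α ∈ Le(F_k) : α ⊬₀ ¬φ}`. -/
noncomputable def DBMSeq.Pl [DecidableEq V] (M : DBMSeq V) (k : ℕ) (φ : Sentence V) : ℝ := by
  classical exact ∑ α ∈ M.toDBFSeq.leaves k,
    if ¬ Der0O α (Sentence.neg φ) then M.m k α else 0

/-! ### Auxiliary notions -/

/-- A probability function on `SL`: a `[0,1]`-valued function which is normalised on
classical tautologies and additive on classically incompatible disjuncts. -/
def IsProbability (P : Sentence V → ℝ) : Prop :=
  (∀ φ, 0 ≤ P φ ∧ P φ ≤ 1) ∧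
  (∀ φ, CC (∅ : Set (Sentence V)) φ → P φ = 1) ∧
  (∀ φ ψ, CC (∅ : Set (Sentence V)) (.neg (.conj φ ψ)) →
    P (.disj φ ψ) = P φ + P ψ)

/-- The literal on `p` prescribed by the valuation `v`. -/
def litOf (v : V → Bool) (p : V) : Sentence V :=
  if v p then .var p else .neg (.var p)

/-- Left-associated conjunction `φ ∧ ψ₁ ∧ ⋯ ∧ ψₙ`. -/
def listConj : Sentence V → List (Sentence V) → Sentence V
  | φ, [] => φ
  | φ, ψ :: l => listConj (.conj φ ψ) l

/-- Left-associated disjunction `φ ∨ ψ₁ ∨ ⋯ ∨ ψₙ`. -/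
def listDisj : Sentence V → List (Sentence V) → Sentence V
  | φ, [] => φ
  | φ, ψ :: l => listDisj (.disj φ ψ) l

/-- Conjunction of a list of sentences (`⊥` for the empty list, which is never used). -/
def conjList : List (Sentence V) → Sentence V
  | [] => .bot
  | ψ :: l => listConj ψ l

/-- Disjunction of a list of sentences (`⊥` for the empty list, which is never used). -/
def disjList : List (Sentence V) → Sentence V
  | [] => .bot
  | ψ :: l => listDisj ψ l

/-- `α` is an atom of the language: a maximal (classically consistent) conjunction of
literals, with exactly one literal per propositional variable. -/
def IsAtom (α : Sentence V) : Prop :=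
  ∃ (v : V → Bool) (l : List V), l.Nodup ∧ (∀ p : V, p ∈ l) ∧ l ≠ [] ∧
    α = conjList (l.map (litOf v))

/-- The conjunction `⋀_{i ∈ S} φ_i` of a finite set of indexed sentences. -/
def finsetConj {n : ℕ} (φ : Fin n → Sentence V) (S : Finset (Fin n)) : Sentence V :=
  conjList ((S.sort (· ≤ ·)).map φ)

/-- The finite set of subsentences of a sentence. -/
def subsF [DecidableEq V] : Sentence V → Finset (Sentence V)
  | .var p => {Sentence.var p}
  | .bot => {Sentence.bot}
  | .neg φ => insert (.neg φ) (subsF φ)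
  | .conj φ ψ => insert (.conj φ ψ) (subsF φ ∪ subsF ψ)
  | .disj φ ψ => insert (.disj φ ψ) (subsF φ ∪ subsF ψ)

/-- All branching sentences of the tree belong to `S`. -/
def BranchesIn [DecidableEq V] : DBTree V → Finset (Sentence V) → Prop
  | .leaf, _ => True
  | .node β t₁ t₂, S => β ∈ S ∧ BranchesIn t₁ S ∧ BranchesIn t₂ S

/-!
A derivation of `φ ⊢ₖ ψ` unfolds into a perfect tree of depth `k` whose leaves derive `ψ`;
hung below a first branching on `φ`, it gives a depth-`(k+1)` tree all of whose `2^(k+1)`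
leaves, which carry pairwise distinct labels, decide `¬φ ∨ ψ`. Since a tree of `F_{k+1}` has
at most `2^(k+1)` leaves, maximality forces every leaf of `F_{k+1}` to decide `¬φ ∨ ψ`. A
0-depth consistent leaf deriving `φ` then derives `ψ`: were it to derive `¬(¬φ ∨ ψ)`, it would
be classically inconsistent, hence 0-depth inconsistent as `F_{k+1}` is free of deep
contradictions. So `b_{k+1}(φ) ⊆ b_{k+1}(ψ)`.
-/

theorem der0_sound {Γ : Set (Sentence V)} {φ : Sentence V} (h : Der0 Γ φ) : CC Γ φ :=
  fun v hv => by induction h <;> simp_all [eval]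

theorem derK_sound : ∀ {k : ℕ} {Γ : Set (Sentence V)} {φ : Sentence V}, DerK k Γ φ → CC Γ φ
  | 0, _, _, h => der0_sound h
  | _ + 1, _, _, ⟨β, _, h₁, h₂⟩ => fun v hv => by
      by_cases hβ : eval v β = true
      · exact derK_sound h₁ v (by simpa [hβ] using hv)
      · exact derK_sound h₂ v (by simpa [eval, hβ] using hv)

theorem der0_cut {Γ Δ : Set (Sentence V)} {φ : Sentence V} (h : Der0 Γ φ)
    (hΔ : ∀ γ ∈ Γ, Der0 Δ γ) : Der0 Δ φ := by
  induction h with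
  | prem hm => exact hΔ _ hm
  | andI _ _ ih₁ ih₂ => exact .andI ih₁ ih₂
  | andE1 _ ih => exact .andE1 ih
  | andE2 _ ih => exact .andE2 ih
  | orI1 _ ih => exact .orI1 ih
  | orI2 _ ih => exact .orI2 ih
  | orE1 _ _ ih₁ ih₂ => exact .orE1 ih₁ ih₂
  | orE2 _ _ ih₁ ih₂ => exact .orE2 ih₁ ih₂
  | negAndI1 _ ih => exact .negAndI1 ih
  | negAndI2 _ ih => exact .negAndI2 ih
  | negAndE1 _ _ ih₁ ih₂ => exact .negAndE1 ih₁ ih₂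
  | negAndE2 _ _ ih₁ ih₂ => exact .negAndE2 ih₁ ih₂
  | negOrI _ _ ih₁ ih₂ => exact .negOrI ih₁ ih₂
  | negOrE1 _ ih => exact .negOrE1 ih
  | negOrE2 _ ih => exact .negOrE2 ih
  | dnI _ ih => exact .dnI ih
  | dnE _ ih => exact .dnE ih
  | botI _ _ ih₁ ih₂ => exact .botI ih₁ ih₂
  | botE _ ih => exact .botE ih

theorem der0O_extend {r : Option (Sentence V)} {β χ : Sentence V} (h : Der0O r χ) :
    Der0O (extend r β) χ := by
  cases r with
  | none => exact der0_cut h (by simp [prems])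
  | some α => exact der0_cut h (by simpa [prems] using .andE1 (.prem rfl))

theorem der0O_extend_self (r : Option (Sentence V)) (β : Sentence V) :
    Der0O (extend r β) β := by
  cases r with
  | none => exact .prem rfl
  | some α => exact .andE2 (.prem rfl)

/-- The chain of left conjuncts `d, a₁, a₂, …` of `d = ((… ∧ _) ∧ _) ∧ _`. -/
def leftSpine : Sentence V → List (Sentence V)
  | .conj a b => .conj a b :: leftSpine a
  | a => [a]

theorem sizeOf_le_of_mem_leftSpine {x : Sentence V} :
    ∀ {d : Sentence V}, x ∈ leftSpine d → sizeOf x ≤ sizeOf d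
  | .conj a b, hx => by
      rcases List.mem_cons.1 hx with rfl | hx
      · exact le_rfl
      · have := sizeOf_le_of_mem_leftSpine hx
        simp only [Sentence.conj.sizeOf_spec]
        omega
  | .var _, hx | .bot, hx | .neg _, hx | .disj _ _, hx => by
      rw [List.mem_singleton.1 hx]

section LeafLabels

variable [DecidableEq V]

theorem der0O_of_mem_leafLabels {t : DBTree V} {r δ : Option (Sentence V)} {χ : Sentence V}
    (hδ : δ ∈ leafLabels r t) (h : Der0O r χ) : Der0O δ χ := by
  induction t generalizing r with
  | leaf =>
      rw [leafLabels, Finset.mem_singleton] at hδ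
      rwa [hδ]
  | node β t₁ t₂ ih₁ ih₂ =>
      rw [leafLabels, Finset.mem_union] at hδ
      exact hδ.elim (ih₁ · (der0O_extend h)) (ih₂ · (der0O_extend h))

theorem leftSpine_suffix_of_mem_leafLabels {t : DBTree V} {s : Sentence V}
    {δ : Option (Sentence V)} (hδ : δ ∈ leafLabels (some s) t) :
    ∃ d, δ = some d ∧ leftSpine s <:+ leftSpine d := by
  induction t generalizing s with
  | leaf => exact ⟨s, Finset.mem_singleton.1 hδ, List.suffix_refl _⟩
  | node β t₁ t₂ ih₁ ih₂ =>
      rw [leafLabels, Finset.mem_union] at hδ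
      rcases hδ with hδ | hδ
      · obtain ⟨d, rfl, hd⟩ := ih₁ hδ
        exact ⟨d, rfl, (List.suffix_cons _ _).trans hd⟩
      · obtain ⟨d, rfl, hd⟩ := ih₂ hδ
        exact ⟨d, rfl, (List.suffix_cons _ _).trans hd⟩

/-- The left spine of a leaf label ends with the left spine of the label of each ancestor, and the
two children of a node have spines of equal length differing in their heads (`r ∧ β` versus
`r ∧ ¬β`); for the root `*` the spine `[¬β]` would have to occur inside that of `β`. -/
theorem disjoint_leafLabels_extend (r : Option (Sentence V)) (β : Sentence V)
    (t₁ t₂ : DBTree V) :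
    Disjoint (leafLabels (extend r β) t₁) (leafLabels (extend r (.neg β)) t₂) := by
  rw [Finset.disjoint_left]
  intro δ h₁ h₂
  obtain ⟨d, rfl, hd₁⟩ := leftSpine_suffix_of_mem_leafLabels h₁
  obtain ⟨d', hdd', hd₂⟩ := leftSpine_suffix_of_mem_leafLabels h₂
  cases Option.some.inj hdd'
  cases r with
  | none =>
      have hlen : (leftSpine (.neg β)).length ≤ (leftSpine β).length := by
        cases β <;> simp [leftSpine]
      have hmem : Sentence.neg β ∈ leftSpine β :=
        (List.suffix_of_suffix_length_le hd₂ hd₁ hlen).subset (List.mem_singleton_self _)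
      have := sizeOf_le_of_mem_leftSpine hmem
      simp at this
  | some ρ =>
      have heq := (List.suffix_of_suffix_length_le hd₁ hd₂ (by simp [leftSpine])).eq_of_length
        (by simp [leftSpine])
      simp only [leftSpine, List.cons.injEq, Sentence.conj.injEq] at heq
      have := congrArg sizeOf heq.1.2
      simp at this

theorem card_leafLabels (t : DBTree V) (r : Option (Sentence V)) :
    (leafLabels r t).card = numLeaves t := by
  induction t generalizing r with
  | leaf => simp [leafLabels, numLeaves]
  | node β t₁ t₂ ih₁ ih₂ =>
      rw [leafLabels, Finset.card_union_of_disjoint (disjoint_leafLabels_extend r β t₁ t₂),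
        ih₁, ih₂, numLeaves]

end LeafLabels

inductive IsPerfect : ℕ → DBTree V → Prop
  | leaf : IsPerfect 0 .leaf
  | node {k : ℕ} {t₁ t₂ : DBTree V} (β : Sentence V) :
      IsPerfect k t₁ → IsPerfect k t₂ → IsPerfect (k+1) (.node β t₁ t₂)

theorem IsPerfect.numLeaves_eq {k : ℕ} {t : DBTree V} (h : IsPerfect k t) :
    numLeaves t = 2 ^ k := by
  induction h with
  | leaf => rfl
  | node _ _ _ ih₁ ih₂ => rw [numLeaves, ih₁, ih₂, pow_succ]; ring

/-- The perfect tree of depth `j` that agrees with `t` down to depth `j`, missing branchings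
being filled in with `⊥`. -/
def toPerfect : ℕ → DBTree V → DBTree V
  | 0, _ => .leaf
  | j+1, .leaf => .node .bot (toPerfect j .leaf) (toPerfect j .leaf)
  | j+1, .node β t₁ t₂ => .node β (toPerfect j t₁) (toPerfect j t₂)

theorem isPerfect_toPerfect : ∀ (j : ℕ) (t : DBTree V), IsPerfect j (toPerfect j t)
  | 0, _ => .leaf
  | j+1, .leaf => .node _ (isPerfect_toPerfect j _) (isPerfect_toPerfect j _)
  | j+1, .node _ _ _ => .node _ (isPerfect_toPerfect j _) (isPerfect_toPerfect j _)

theorem grow_toPerfect : ∀ (j : ℕ) (t : DBTree V), Grow j (toPerfect j t) (toPerfect (j+1) t)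
  | 0, .leaf | 0, .node _ _ _ => .expand _
  | j+1, .leaf => .node _ (grow_toPerfect j _) (grow_toPerfect j _)
  | j+1, .node _ _ _ => .node _ (grow_toPerfect j _) (grow_toPerfect j _)

theorem IsPerfect.toPerfect_eq {k : ℕ} {t : DBTree V} (h : IsPerfect k t) :
    toPerfect k t = t := by
  induction h with
  | leaf => rfl
  | node β _ _ ih₁ ih₂ => rw [toPerfect, ih₁, ih₂]

theorem IsPerfect.isDepthKTree {k : ℕ} {t : DBTree V} (h : IsPerfect k t) :
    IsDepthKTree k t := by
  refine ⟨⟨fun j => toPerfect j t, rfl, fun j => grow_toPerfect j t, fun j he => ?_⟩,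
    h.toPerfect_eq⟩
  have := congrArg numLeaves he
  rw [(isPerfect_toPerfect _ t).numLeaves_eq, (isPerfect_toPerfect _ t).numLeaves_eq,
    pow_succ] at this
  have := Nat.two_pow_pos j
  omega

theorem numLeaves_le_of_grow {k : ℕ} {t t' : DBTree V} (h : Grow k t t') :
    numLeaves t' ≤ 2 * numLeaves t := by
  induction h with
  | keep | expand => simp [numLeaves]
  | node _ _ _ ih₁ ih₂ => rw [numLeaves, numLeaves]; omega

theorem DBFSeq.numLeaves_tree_le (F : DBFSeq V) {γ : Option (Sentence V)} (hγ : γ ∈ F.Supp)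
    (j : ℕ) : numLeaves (F.tree γ j) ≤ 2 ^ j := by
  induction j with
  | zero => rw [F.init γ hγ]; rfl
  | succ j ih =>
      have := numLeaves_le_of_grow (F.grow γ hγ j)
      rw [pow_succ]
      omega

section Witness

variable [DecidableEq V]

/-- A `k`-depth derivation `Γ ⊢ₖ ψ` unfolds into a perfect tree of depth `k` whose branching
sentences are the virtual assumptions `β` of the derivation. -/
theorem exists_isPerfect_of_derK {k : ℕ} {Γ : Set (Sentence V)} {ψ : Sentence V}
    {r : Option (Sentence V)} (h : DerK k Γ ψ) (hr : ∀ γ ∈ Γ, Der0O r γ) :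
    ∃ t, IsPerfect k t ∧ ∀ δ ∈ leafLabels r t, Der0O δ ψ := by
  induction k generalizing Γ r with
  | zero =>
      refine ⟨.leaf, .leaf, fun δ hδ => ?_⟩
      rw [leafLabels, Finset.mem_singleton] at hδ
      exact hδ ▸ der0_cut h hr
  | succ k ih =>
      obtain ⟨β, -, h₁, h₂⟩ := h
      have hr' : ∀ β' : Sentence V, ∀ γ ∈ insert β' Γ, Der0O (extend r β') γ := by
        rintro β' γ (rfl | hγ)
        exacts [der0O_extend_self r _, der0O_extend (hr γ hγ)]
      obtain ⟨t₁, hp₁, hl₁⟩ := ih h₁ (hr' β)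
      obtain ⟨t₂, hp₂, hl₂⟩ := ih h₂ (hr' (.neg β))
      refine ⟨.node β t₁ t₂, .node β hp₁ hp₂, fun δ hδ => ?_⟩
      rw [leafLabels, Finset.mem_union] at hδ
      exact hδ.elim (hl₁ δ) (hl₂ δ)

/-- Branching first on `φ` and then following the derivation of `φ ⊢ₖ ψ` on the `φ` side
closes a perfect tree of depth `k + 1` under `¬φ ∨ ψ`. -/
theorem exists_isPerfect_treeClosed_of_derK {k : ℕ} {φ ψ : Sentence V}
    (h : DerK k {φ} ψ) (r : Option (Sentence V)) :
    ∃ t, IsPerfect (k+1) t ∧ TreeClosed r t (.disj (.neg φ) ψ) := by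
  obtain ⟨t, hp, hl⟩ := exists_isPerfect_of_derK (r := extend r φ) h
    (by simpa using der0O_extend_self r φ)
  refine ⟨.node φ t t, .node φ hp hp, fun δ hδ => .inl ?_⟩
  rw [leafLabels, Finset.mem_union] at hδ
  rcases hδ with hδ | hδ
  · exact .orI2 (hl δ hδ)
  · exact .orI1 (der0O_of_mem_leafLabels hδ (der0O_extend_self r _))

theorem treeClosed_of_treeMaximal {r : Option (Sentence V)} {j : ℕ} {t : DBTree V}
    {χ : Sentence V} (hmax : TreeMaximal r j t χ) (ht : numLeaves t ≤ 2 ^ j)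
    (hclosed : ∃ t', IsPerfect j t' ∧ TreeClosed r t' χ) : TreeClosed r t χ := by
  classical
  obtain ⟨t', hp, hcl⟩ := hclosed
  by_contra hopen
  obtain ⟨δ, hδ, hnd⟩ : ∃ δ ∈ leafLabels r t, ¬ Decides δ χ := by
    simpa [TreeClosed] using hopen
  have hcount' : decCount (leafLabels r t') χ = 2 ^ j := by
    rw [decCount, Finset.filter_true_of_mem hcl, card_leafLabels, hp.numLeaves_eq]
  have hcount : decCount (leafLabels r t) χ < 2 ^ j := by
    refine lt_of_lt_of_le (Finset.card_lt_card ?_) ((card_leafLabels t r).trans_le ht)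
    exact Finset.filter_ssubset.2 ⟨δ, hδ, hnd⟩
  have := hmax t' hp.isDepthKTree
  omega

end Witness

theorem der0O_of_decides_disj_neg {α : Option (Sentence V)} {φ ψ : Sentence V}
    (hdec : Decides α (.disj (.neg φ) ψ)) (hφ : Der0O α φ) (hφψ : CC {φ} ψ)
    (hcons : ¬ CCO α .bot) : Der0O α ψ := by
  rcases hdec with hχ | hnχ
  · exact .orE1 hχ (.dnI hφ)
  · refine absurd (fun v hv => ?_) hcons
    have hψ := hφψ v (by simpa using der0_sound hφ v hv)
    have hnψ := der0_sound (Der0.negOrE2 hnχ) v hv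
    simp [eval, hψ] at hnψ

theorem DBMSeq.B_le_B [DecidableEq V] (M : DBMSeq V) {k : ℕ} {φ ψ : Sentence V}
    (h : ∀ α ∈ M.leaves k, Der0O α φ → ¬ Der0O α .bot → Der0O α ψ) :
    M.B k φ ≤ M.B k ψ := by
  unfold DBMSeq.B
  refine Finset.sum_le_sum fun α hα => ?_
  split_ifs with hφ hψ hψ
  · exact le_rfl
  · exact absurd ⟨h α hα hφ.1 hφ.2, hφ.2⟩ hψ
  · exact M.nonneg k α hα
  · exact le_rfl

theorem belief_monotone_of_maximal_general {V : Type} [DecidableEq V]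
    (k : ℕ) (φ ψ : Sentence V) (h : DerK k {φ} ψ)
    (M : DBMSeq V)
    (hmax : M.toDBFSeq.Maximal (k+1) (.disj (.neg φ) ψ))
    (hfree : M.toDBFSeq.FreeDC (k+1)) :
    M.B (k+1) φ ≤ M.B (k+1) ψ := by
  refine M.B_le_B fun α hα hφ hbot => ?_
  obtain ⟨γ, hγ, hαγ⟩ := Finset.mem_biUnion.1 hα
  have hclosed := treeClosed_of_treeMaximal (hmax γ hγ) (M.numLeaves_tree_le hγ (k+1))
    (exists_isPerfect_treeClosed_of_derK h γ)
  exact der0O_of_decides_disj_neg (hclosed α hαγ) hφ (derK_sound h)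
    fun hcc => hbot (hfree γ hγ α hαγ hcc)

/-- If `φ ⊢ₖ ψ` and `(F_j, m_j)` is any DBM-sequence such that `F_{k+1}` is
`{¬φ ∨ ψ}`-maximal and free of deep contradictions, then `B_{k+1}(φ) ≤ B_{k+1}(ψ)`. -/
theorem belief_monotone_of_maximal {V : Type} [DecidableEq V] [Fintype V]
    (k : ℕ) (φ ψ : Sentence V) (h : DerK k {φ} ψ)
    (M : DBMSeq V)
    (hmax : M.toDBFSeq.Maximal (k+1) (.disj (.neg φ) ψ))
    (hfree : M.toDBFSeq.FreeDC (k+1)) :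
    M.B (k+1) φ ≤ M.B (k+1) ψ :=
  belief_monotone_of_maximal_general k φ ψ h M hmax hfree

end DBB
end

section
/- Let (F_k, m_k) be a DBM-sequence, k ∈ ℕ, and φ_1,…,φ_n ∈ SL. Then the k-depth belief function satisfies the n-monotonicity inequality B_k(φ_1 ∨ ⋯ ∨ φ_n) ≥ Σ over nonempty S ⊆ {1,…,n} of (−1)^{|S|−1} B_k(⋀_{i∈S} φ_i). -/
/-!
Common framework: Depth-Bounded Boolean Logics, depth-bounded trees/forests,
mass functions and depth-bounded belief functions.
-/

namespace DBB

variable {V : Type}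

/-!
`B_k(ψ)` is the `m_k`-mass of the set `b_k(ψ)` of consistent leaves that 0-depth derive `ψ`.
Since `⊢₀` derives a conjunction exactly when it derives every conjunct, `b_k` turns
`⋀_{i ∈ S} φ_i` into `⋂_{i ∈ S} b_k(φ_i)`, so inclusion–exclusion identifies the alternating
sum with the mass of `⋃_i b_k(φ_i)`. Every leaf deriving some `φ_i` derives `φ_1 ∨ ⋯ ∨ φ_n`
by ∨-introduction, and `m_k` is nonnegative, so this mass is at most `B_k(φ_1 ∨ ⋯ ∨ φ_n)`.
-/

theorem der0_listConj_iff {Γ : Set (Sentence V)} {φ : Sentence V} {l : List (Sentence V)} :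
    Der0 Γ (listConj φ l) ↔ ∀ ψ ∈ φ :: l, Der0 Γ ψ := by
  induction l generalizing φ with
  | nil => simp [listConj]
  | cons a l ih =>
    simp only [listConj, ih, List.forall_mem_cons]
    exact ⟨fun ⟨h, hl⟩ => ⟨h.andE1, h.andE2, hl⟩, fun ⟨hφ, ha, hl⟩ => ⟨hφ.andI ha, hl⟩⟩

theorem der0_conjList_iff {Γ : Set (Sentence V)} {l : List (Sentence V)} (hl : l ≠ []) :
    Der0 Γ (conjList l) ↔ ∀ ψ ∈ l, Der0 Γ ψ := by
  cases l with
  | nil => exact absurd rfl hl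
  | cons a l => exact der0_listConj_iff

theorem der0_finsetConj_iff {Γ : Set (Sentence V)} {n : ℕ} (φ : Fin n → Sentence V)
    {S : Finset (Fin n)} (hS : S.Nonempty) :
    Der0 Γ (finsetConj φ S) ↔ ∀ i ∈ S, Der0 Γ (φ i) := by
  have hne : (S.sort (· ≤ ·)).map φ ≠ [] :=
    List.ne_nil_of_length_pos (by simpa using hS.card_pos)
  simp [finsetConj, der0_conjList_iff hne]

theorem der0_listDisj_of_mem {Γ : Set (Sentence V)} {φ ψ : Sentence V} {l : List (Sentence V)}
    (hψ : ψ ∈ φ :: l) (h : Der0 Γ ψ) : Der0 Γ (listDisj φ l) := by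
  induction l generalizing φ ψ with
  | nil => rwa [List.mem_singleton.1 hψ] at h
  | cons a l ih =>
    rcases List.mem_cons.1 hψ with rfl | hψ
    · exact ih List.mem_cons_self h.orI1
    rcases List.mem_cons.1 hψ with rfl | hψ
    · exact ih List.mem_cons_self h.orI2
    · exact ih (List.mem_cons_of_mem _ hψ) h

theorem der0_disjList_of_mem {Γ : Set (Sentence V)} {ψ : Sentence V} {l : List (Sentence V)}
    (hψ : ψ ∈ l) (h : Der0 Γ ψ) : Der0 Γ (disjList l) := by
  cases l with
  | nil => cases hψ
  | cons a l => exact der0_listDisj_of_mem hψ h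

theorem neg_one_pow_succ_eq_neg_one_pow_pred {c : ℕ} (hc : 0 < c) :
    (((-1) ^ (c + 1) : ℤ) : ℝ) = (-1 : ℝ) ^ (c - 1) := by
  rw [show c + 1 = c - 1 + 2 by omega, pow_add]
  simp

namespace DBMSeq

variable [DecidableEq V] (M : DBMSeq V) (k : ℕ)

noncomputable def beliefSet (φ : Sentence V) : Finset (Option (Sentence V)) := by
  classical exact (M.leaves k).filter (fun α => Der0O α φ ∧ ¬ Der0O α .bot)

theorem mem_beliefSet {φ : Sentence V} {α : Option (Sentence V)} :
    α ∈ M.beliefSet k φ ↔ α ∈ M.leaves k ∧ Der0O α φ ∧ ¬ Der0O α .bot := by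
  classical
  simp [beliefSet]

theorem B_eq_sum_beliefSet (φ : Sentence V) : M.B k φ = ∑ α ∈ M.beliefSet k φ, M.m k α := by
  classical
  simp [B, beliefSet, Finset.sum_filter]

theorem beliefSet_finsetConj {n : ℕ} (φ : Fin n → Sentence V) {S : Finset (Fin n)}
    (hS : S.Nonempty) : M.beliefSet k (finsetConj φ S) = S.inf' hS (M.beliefSet k ∘ φ) := by
  ext α
  simp only [mem_beliefSet, Der0O, Finset.mem_inf', Function.comp_apply,
    der0_finsetConj_iff φ hS]
  constructor
  · exact fun ⟨hα, hφ, hbot⟩ i hi => ⟨hα, hφ i hi, hbot⟩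
  · intro h
    obtain ⟨i, hi⟩ := hS
    exact ⟨(h i hi).1, fun j hj => (h j hj).2.1, (h i hi).2.2⟩

theorem biUnion_beliefSet_subset_disjList {n : ℕ} (φ : Fin n → Sentence V) :
    Finset.univ.biUnion (M.beliefSet k ∘ φ) ⊆ M.beliefSet k (disjList (List.ofFn φ)) := by
  intro α hα
  obtain ⟨i, -, hα⟩ := Finset.mem_biUnion.1 hα
  simp only [mem_beliefSet, Function.comp_apply, Der0O] at hα ⊢
  exact ⟨hα.1, der0_disjList_of_mem (List.mem_ofFn.2 ⟨i, rfl⟩) hα.2.1, hα.2.2⟩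

theorem sum_biUnion_beliefSet_eq_alternating_sum {n : ℕ} (φ : Fin n → Sentence V) :
    ∑ α ∈ Finset.univ.biUnion (M.beliefSet k ∘ φ), M.m k α =
      ∑ S ∈ Finset.univ.filter (fun S : Finset (Fin n) => S.Nonempty),
        (-1 : ℝ) ^ (S.card - 1) * M.B k (finsetConj φ S) := by
  rw [Finset.inclusion_exclusion_sum_biUnion, Finset.powerset_univ]
  conv_rhs => rw [← Finset.sum_coe_sort]
  refine Fintype.sum_congr _ _ fun S => ?_
  have hSne : S.1.Nonempty := (Finset.mem_filter.1 S.2).2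
  rw [zsmul_eq_mul, neg_one_pow_succ_eq_neg_one_pow_pred hSne.card_pos, B_eq_sum_beliefSet,
    beliefSet_finsetConj M k φ hSne]

end DBMSeq

theorem belief_n_monotone_general {V : Type} [DecidableEq V]
    (M : DBMSeq V) (k : ℕ) {n : ℕ} (φ : Fin n → Sentence V) :
    ∑ S ∈ Finset.univ.filter (fun S : Finset (Fin n) => S.Nonempty),
        (-1 : ℝ) ^ (S.card - 1) * M.B k (finsetConj φ S)
      ≤ M.B k (disjList (List.ofFn φ)) := by
  rw [← M.sum_biUnion_beliefSet_eq_alternating_sum k φ, M.B_eq_sum_beliefSet]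
  refine Finset.sum_le_sum_of_subset_of_nonneg (M.biUnion_beliefSet_subset_disjList k φ) ?_
  intro α hα _
  exact M.nonneg k α ((M.mem_beliefSet k).1 hα).1

/-- n-monotonicity of k-depth belief functions:
`B_k(φ₁ ∨ ⋯ ∨ φₙ) ≥ Σ_{∅ ≠ S ⊆ {1,…,n}} (−1)^{|S|−1} B_k(⋀_{i ∈ S} φ_i)`. -/
theorem belief_n_monotone {V : Type} [DecidableEq V] [Fintype V]
    (M : DBMSeq V) (k : ℕ) {n : ℕ} (hn : 0 < n) (φ : Fin n → Sentence V) :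
    ∑ S ∈ Finset.univ.filter (fun S : Finset (Fin n) => S.Nonempty),
        (-1 : ℝ) ^ (S.card - 1) * M.B k (finsetConj φ S)
      ≤ M.B k (disjList (List.ofFn φ)) :=
  belief_n_monotone_general M k φ

end DBB
end

section
/- Let (F_k, m_k) be a DBM-sequence free of deep contradictions, let φ, ψ ∈ SL, and let n ∈ ℕ be such that F_n is both {φ}-closed and {ψ}-closed and B_n(φ∧ψ) = 0. Then B_n(φ∨ψ) = B_n(φ) + B_n(ψ). -/
/-!
Common framework: Depth-Bounded Boolean Logics, depth-bounded trees/forests,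
mass functions and depth-bounded belief functions.
-/

namespace DBB

variable {V : Type}

private lemma disj_iff0 {V : Type} {Γ : Set (Sentence V)} {φ ψ : Sentence V}
    (h : Der0 Γ φ ∨ Der0 Γ (.neg φ)) :
    Der0 Γ (.disj φ ψ) ↔ Der0 Γ φ ∨ Der0 Γ ψ := by
  constructor
  · intro hd
    rcases h with h | h
    · exact Or.inl h
    · exact Or.inr (Der0.orE1 hd h)
  · rintro (h | h)
    · exact Der0.orI1 h
    · exact Der0.orI2 h

/-- For a DBM-sequence free of deep contradictions, if `F_n` is both
`{φ}`-closed and `{ψ}`-closed and `B_n(φ ∧ ψ) = 0`, then `B_n(φ ∨ ψ) = B_n(φ) + B_n(ψ)`. -/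
theorem belief_additive_of_closed {V : Type} [DecidableEq V] [Fintype V]
    (M : DBMSeq V) (φ ψ : Sentence V) (n : ℕ)
    (hφ : M.toDBFSeq.Closed n φ) (hψ : M.toDBFSeq.Closed n ψ)
    (h0 : M.B n (.conj φ ψ) = 0) :
    M.B n (.disj φ ψ) = M.B n φ + M.B n ψ := by
  classical
  have h0' : ∀ α ∈ M.toDBFSeq.leaves n,
      (if Der0O α (Sentence.conj φ ψ) ∧ ¬ Der0O α Sentence.bot then M.m n α else 0) = 0 := by
    rw [← Finset.sum_eq_zero_iff_of_nonneg]
    · exact h0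
    · intro α hα
      split
      · exact M.nonneg n α hα
      · exact le_refl 0
  unfold DBMSeq.B
  rw [← Finset.sum_add_distrib]
  apply Finset.sum_congr rfl
  intro α hα
  by_cases hb : Der0O α Sentence.bot
  · simp [hb]
  · -- α is in some tree, so it decides φ and ψ
    obtain ⟨γ, hγ, hmem⟩ := Finset.mem_biUnion.mp (by simpa [DBFSeq.leaves] using hα)
    have dφ : Decides α φ := hφ γ hγ α hmem
    have dψ : Decides α ψ := hψ γ hγ α hmem
    by_cases h1 : Der0O α φ <;> by_cases h2 : Der0O α ψ
    · have hm : M.m n α = 0 := by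
        have := h0' α hα
        rwa [if_pos ⟨Der0.andI h1 h2, hb⟩] at this
      have hd : Der0O α (Sentence.disj φ ψ) := Der0.orI1 h1
      simp [h1, h2, hb, hd, hm]
    · have hd : Der0O α (Sentence.disj φ ψ) := Der0.orI1 h1
      simp [h1, h2, hb, hd]
    · have hd : Der0O α (Sentence.disj φ ψ) := Der0.orI2 h2
      simp [h1, h2, hb, hd]
    · have hd : ¬ Der0O α (Sentence.disj φ ψ) := by
        rw [Der0O, disj_iff0 dφ]
        tauto
      simp [h1, h2, hb, hd]

end DBB
end
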